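/- Let f ∈ C^α_loc(ℝ^d) with α > d/2 (in particular any f ∈ C^d(ℝ^d)), and let δ₀ ∈ C^{−d}(ℝ^d) be the Dirac delta distribution centered at the origin. Then the canonical product f·δ₀ ∈ D'(ℝ^d) exists, is given by (f·δ₀)(φ) = δ₀(fφ) for every test function φ, and equals f(0)δ₀. -/

import Mathlib

open MeasureTheory Real Set Filter Metric
open scoped ENNReal NNReal Topology BigOperators

noncomputable section

/-- Euclidean space `ℝ^d`. -/
abbrev Ed (d : ℕ) := EuclideanSpace ℝ (Fin d)

/-- A (model for a) distribution on `ℝ^d`: a linear functional on functions,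
whose relevant values are those on test functions. -/
abbrev Distr (d : ℕ) := (Ed d → ℝ) →ₗ[ℝ] ℝ

variable {d : ℕ}

/-- A test function: smooth and compactly supported. -/
def IsTestFunction (φ : Ed d → ℝ) : Prop :=
  ContDiff ℝ (⊤ : ℕ∞) φ ∧ HasCompactSupport φ

/-- The scaled and translated test function `φ^λ_x(y) = λ^{-d} φ((x - y)/λ)`. -/
def scaleTF (φ : Ed d → ℝ) (x : Ed d) (l : ℝ) : Ed d → ℝ :=
  fun y => l ^ (-(d : ℤ)) * φ (l⁻¹ • (x - y))

/-- The scaling `f^λ_{x₀}(y) = λ^{-d} f(λ⁻¹ (y - x₀))` used for the scaling degree. -/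
def sdScaleFun (f : Ed d → ℝ) (x₀ : Ed d) (l : ℝ) : Ed d → ℝ :=
  fun y => l ^ (-(d : ℤ)) * f (l⁻¹ • (y - x₀))

/-- `⌊α⌋ = max {n : ℤ | n < α}`. -/
def lfloor (α : ℝ) : ℤ := ⌈α⌉ - 1

/-- The class `B^r` of test functions supported in the unit ball with `C^r`-norm at most 1. -/
def InBr (r : ℕ) (φ : Ed d → ℝ) : Prop :=
  IsTestFunction φ ∧ tsupport φ ⊆ Metric.ball (0 : Ed d) 1 ∧
    ∀ k ≤ r, ∀ x, ‖iteratedFDeriv ℝ k φ x‖ ≤ 1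

/-- The class `B^r_m` of elements of `B^r` whose moments of order `≤ m` vanish. -/
def InBrM (r : ℕ) (m : ℤ) (φ : Ed d → ℝ) : Prop :=
  InBr r φ ∧ ∀ k : Fin d → ℕ, ((∑ i, k i : ℤ) ≤ m) →
    (∫ x : Ed d, (∏ i, x i ^ k i) * φ x) = 0

/-- Taylor polynomial of order `n` of `f` centered at `x`, evaluated at `y`. -/
def taylorPoly (f : Ed d → ℝ) (x y : Ed d) (n : ℕ) : ℝ :=
  ∑ k ∈ Finset.range (n + 1),
    ((k.factorial : ℝ))⁻¹ * iteratedFDeriv ℝ k f x (fun _ => y - x)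

/-- Local Hölder regularity `C^α_loc` for functions, `α > 0`. -/
def HolderFunLoc (α : ℝ) (f : Ed d → ℝ) : Prop :=
  ContDiff ℝ ((lfloor α).toNat : ℕ∞) f ∧
    ∀ K : Set (Ed d), IsCompact K → ∃ C : ℝ, ∀ x ∈ K, ∀ y ∈ K,
      |f y - taylorPoly f x y (lfloor α).toNat| ≤ C * ‖x - y‖ ^ α

/-- Hölder regularity `C^β` (uniformly on every compact) for distributions, `β < 0`. -/
def HolderDistOn (u : Distr d) (β : ℝ) : Prop :=
  ∀ K : Set (Ed d), IsCompact K → ∃ C : ℝ, ∀ x ∈ K, ∀ l ∈ Set.Ioc (0 : ℝ) 1,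
    ∀ φ : Ed d → ℝ, InBr (-(lfloor β)).toNat φ → |u (scaleTF φ x l)| ≤ C * l ^ β

/-- Membership of a distribution in `C^α_loc` for a general real `α`. -/
def MemHolderLoc (u : Distr d) (α : ℝ) : Prop :=
  (0 < α → ∃ f : Ed d → ℝ, HolderFunLoc α f ∧
      ∀ ψ, IsTestFunction ψ → u ψ = ∫ x, f x * ψ x) ∧
  (α ≤ 0 → HolderDistOn u α)

/-- Hölder seminorm `‖f‖_{C^α(K)}` for `α > 0`. -/
def holderPosSeminorm (f : Ed d → ℝ) (α : ℝ) (K : Set (Ed d)) : ℝ :=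
  max (sSup {v : ℝ | ∃ k ≤ (lfloor α).toNat, ∃ x ∈ K, v = ‖iteratedFDeriv ℝ k f x‖})
      (sSup {v : ℝ | ∃ x ∈ K, ∃ y ∈ K,
        v = |f y - taylorPoly f x y (lfloor α).toNat| / ‖x - y‖ ^ α})

/-- Hölder seminorm `‖u‖_{C^β(K)}` for `β < 0`. -/
def holderNegSeminorm (u : Distr d) (β : ℝ) (K : Set (Ed d)) : ℝ :=
  sSup {v : ℝ | ∃ x ∈ K, ∃ l ∈ Set.Ioc (0 : ℝ) 1, ∃ φ, InBr (-(lfloor β)).toNat φ ∧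
    v = |u (scaleTF φ x l)| / l ^ β}

/-- `L^p`-type quantity (in `ℝ≥0∞`) of `g` on a set `K`. -/
def lpOn (p : ℝ≥0∞) (K : Set (Ed d)) (g : Ed d → ℝ≥0∞) : ℝ≥0∞ :=
  if p = ∞ then essSup g (volume.restrict K)
  else (∫⁻ x in K, g x ^ p.toReal) ^ (1 / p.toReal)

/-- `ℓ^q`-type quantity (in `ℝ≥0∞`) of a sequence. -/
def lqSeq (q : ℝ≥0∞) (a : ℕ → ℝ≥0∞) : ℝ≥0∞ :=
  if q = ∞ then ⨆ n, a n else (∑' n, a n ^ q.toReal) ^ (1 / q.toReal)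

/-- The Besov integrand `sup_{ψ ∈ B^r} |u(ψ^{2^{-n}}_x)| / 2^{-nγ}` for negative regularity. -/
def besovTermNeg (u : Distr d) (γ : ℝ) (r : ℕ) (n : ℕ) (x : Ed d) : ℝ≥0∞ :=
  ⨆ φ ∈ {φ : Ed d → ℝ | InBr r φ},
    ENNReal.ofReal (|u (scaleTF φ x ((2 : ℝ) ^ (-(n : ℤ))))| * (2 : ℝ) ^ ((n : ℝ) * γ))

/-- The Besov integrand `sup_{ψ ∈ B^r_{⌊α⌋}} |u(ψ^{2^{-n}}_x)| / 2^{-nα}`. -/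
def besovTermPos (u : Distr d) (α : ℝ) (r : ℕ) (n : ℕ) (x : Ed d) : ℝ≥0∞ :=
  ⨆ φ ∈ {φ : Ed d → ℝ | InBrM r (lfloor α) φ},
    ENNReal.ofReal (|u (scaleTF φ x ((2 : ℝ) ^ (-(n : ℤ))))| * (2 : ℝ) ^ ((n : ℝ) * α))

/-- The Besov integrand `sup_{ψ ∈ B^r} |u(ψ_x)|`. -/
def besovTermUnit (u : Distr d) (r : ℕ) (x : Ed d) : ℝ≥0∞ :=
  ⨆ φ ∈ {φ : Ed d → ℝ | InBr r φ}, ENNReal.ofReal |u (scaleTF φ x 1)|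

/-- Local Besov space `B^γ_{p,q,loc}(ℝ^d)`, negative-regularity characterization. -/
def MemBesovLocNeg (u : Distr d) (γ : ℝ) (p q : ℝ≥0∞) : Prop :=
  ∃ r : ℕ, (r : ℝ) > -γ ∧ ∀ K : Set (Ed d), IsCompact K →
    lqSeq q (fun n => lpOn p K (besovTermNeg u γ r n)) < ∞

/-- Global Besov space `B^γ_{p,q}(ℝ^d)`, negative-regularity characterization. -/
def MemBesovNeg (u : Distr d) (γ : ℝ) (p q : ℝ≥0∞) : Prop :=
  ∃ r : ℕ, (r : ℝ) > -γ ∧ lqSeq q (fun n => lpOn p Set.univ (besovTermNeg u γ r n)) < ∞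

/-- Local Besov space `B^α_{p,q,loc}(ℝ^d)`, nonnegative-regularity characterization. -/
def MemBesovLocPos (u : Distr d) (α : ℝ) (p q : ℝ≥0∞) : Prop :=
  ∃ r : ℕ, (r : ℝ) > -α ∧ ∀ K : Set (Ed d), IsCompact K →
    lpOn p K (besovTermUnit u r) < ∞ ∧
    lqSeq q (fun n => lpOn p K (besovTermPos u α r n)) < ∞

/-- `β*_g = sup {γ ≤ 0 : g ∈ B^γ_{p,∞,loc} for some p ∈ [2,∞]}`. -/
def betaStar (g : Distr d) : ℝ :=
  sSup {γ : ℝ | γ ≤ 0 ∧ ∃ p : ℝ≥0∞, 2 ≤ p ∧ MemBesovLocNeg g γ p ∞}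

/-- Multiplication of a distribution by a function: `(h·u)(ψ) = u(hψ)`. -/
def mulD (h : Ed d → ℝ) (u : Distr d) : Distr d :=
  u.comp (LinearMap.mulLeft ℝ h)

/-- The Fourier transform of a (compactly supported) distribution, as a function. -/
def distFourier (u : Distr d) (ξ : Ed d) : ℂ :=
  (u (fun x => Real.cos (2 * π * (inner ℝ x ξ : ℝ))) : ℂ) -
    (u (fun x => Real.sin (2 * π * (inner ℝ x ξ : ℝ))) : ℂ) * Complex.I

/-- The Japanese bracket weight `⟨ξ⟩^{2s} = (1 + |ξ|²)^s`. -/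
def japBr (ξ : Ed d) (s : ℝ) : ℝ≥0∞ := ENNReal.ofReal ((1 + ‖ξ‖ ^ 2) ^ s)

/-- `H^s(ℝ^d)` membership for a compactly supported distribution. -/
def MemHsCompact (v : Distr d) (s : ℝ) : Prop :=
  (∫⁻ ξ : Ed d, japBr ξ s * (‖distFourier v ξ‖₊ : ℝ≥0∞) ^ 2) < ∞

/-- `H^s_loc(ℝ^d)` membership: every localization lies in `H^s`. -/
def MemHsLoc (u : Distr d) (s : ℝ) : Prop :=
  ∀ φ : Ed d → ℝ, IsTestFunction φ → MemHsCompact (mulD φ u) s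

/-- A conic subset of `ℝ^d`. -/
def IsConicSet (Γ : Set (Ed d)) : Prop := ∀ ξ ∈ Γ, ∀ t : ℝ, 0 < t → t • ξ ∈ Γ

/-- The Sobolev (`H^s`) wave front set of a distribution on `ℝ^d`. -/
def sobolevWF (u : Distr d) (s : ℝ) : Set (Ed d × Ed d) :=
  {p | p.2 ≠ 0 ∧ ¬ ∃ φ : Ed d → ℝ, IsTestFunction φ ∧ φ p.1 ≠ 0 ∧
    ∃ Γ : Set (Ed d), IsOpen Γ ∧ IsConicSet Γ ∧ p.2 ∈ Γ ∧
      (∫⁻ ξ in Γ, japBr ξ s * (‖distFourier (mulD φ u) ξ‖₊ : ℝ≥0∞) ^ 2) < ∞}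

/-- A distribution with compact support. -/
def DistrHasCompactSupport (u : Distr d) : Prop :=
  ∃ K : Set (Ed d), IsCompact K ∧
    ∀ ψ, IsTestFunction ψ → (∀ x ∈ K, ψ x = 0) → u ψ = 0

/-- The singular support of a distribution. -/
def singSupp (u : Distr d) : Set (Ed d) :=
  {x | ¬ ∃ U : Set (Ed d), IsOpen U ∧ x ∈ U ∧ ∃ h : Ed d → ℝ, ContDiffOn ℝ (⊤ : ℕ∞) h U ∧
    ∀ ψ, IsTestFunction ψ → tsupport ψ ⊆ U → u ψ = ∫ y, h y * ψ y}

/-- The singular support of a function: points with no neighbourhood on which it is smooth. -/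
def funSingSupp (f : Ed d → ℝ) : Set (Ed d) :=
  {x | ¬ ∃ U : Set (Ed d), IsOpen U ∧ x ∈ U ∧ ContDiffOn ℝ (⊤ : ℕ∞) f U}

/-- A mollifier: a test function supported in the unit ball with total integral 1. -/
def IsMollifier (ρ : Ed d → ℝ) : Prop :=
  IsTestFunction ρ ∧ tsupport ρ ⊆ Metric.ball (0 : Ed d) 1 ∧ (∫ x, ρ x) = 1

/-- The mollification `(u * ρ_ε)(x)`. -/
def mollifyAt (u : Distr d) (ρ : Ed d → ℝ) (ε : ℝ) (x : Ed d) : ℝ :=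
  u (fun y => ε ^ (-(d : ℤ)) * ρ (ε⁻¹ • (x - y)))

/-- `w` is the canonical product `f·g = Δ*(f ⊗ g)`: for every mollifier, the products of
the mollifications converge to `w`. -/
def IsCanonicalProduct (f g w : Distr d) : Prop :=
  ∀ ρ : Ed d → ℝ, IsMollifier ρ → ∀ ψ : Ed d → ℝ, IsTestFunction ψ →
    Tendsto (fun ε : ℝ => ∫ x, mollifyAt f ρ ε x * mollifyAt g ρ ε x * ψ x)
      (𝓝[>] (0 : ℝ)) (𝓝 (w ψ))

/-- Canonical product on an open subset `U` of `ℝ^d`. -/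
def IsCanonicalProductOn (f g w : Distr d) (U : Set (Ed d)) : Prop :=
  ∀ ρ : Ed d → ℝ, IsMollifier ρ → ∀ ψ : Ed d → ℝ, IsTestFunction ψ → tsupport ψ ⊆ U →
    Tendsto (fun ε : ℝ => ∫ x, mollifyAt f ρ ε x * mollifyAt g ρ ε x * ψ x)
      (𝓝[>] (0 : ℝ)) (𝓝 (w ψ))

/-- Hölder regularity on an open subset `U`. -/
def HolderDistOnOpen (u : Distr d) (β : ℝ) (U : Set (Ed d)) : Prop :=
  ∀ K : Set (Ed d), K ⊆ U → IsCompact K → ∃ C : ℝ, ∀ x ∈ K, ∀ l ∈ Set.Ioc (0 : ℝ) 1,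
    ∀ φ, InBr (-(lfloor β)).toNat φ → tsupport (scaleTF φ x l) ⊆ U →
      |u (scaleTF φ x l)| ≤ C * l ^ β

/-- Precomposition with the scaling `f ↦ f^λ_{x₀}`, as a linear map. -/
def sdScaleMap (x₀ : Ed d) (l : ℝ) : (Ed d → ℝ) →ₗ[ℝ] (Ed d → ℝ) where
  toFun f := sdScaleFun f x₀ l
  map_add' f g := by funext z; simp [sdScaleFun, mul_add]
  map_smul' c f := by funext z; simp [sdScaleFun, smul_eq_mul]; ring

/-- The scaled distribution `t^λ_{x₀}`. -/
def scaleDistr (t : Distr d) (x₀ : Ed d) (l : ℝ) : Distr d := t.comp (sdScaleMap x₀ l)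

/-- Scaling degree of a distribution at a point. -/
def sdAt (t : Distr d) (x₀ : Ed d) : ℝ :=
  sInf {ω : ℝ | ∀ f : Ed d → ℝ, IsTestFunction f →
    Tendsto (fun l : ℝ => l ^ ω * scaleDistr t x₀ l f) (𝓝[>] (0 : ℝ)) (𝓝 0)}

/-- Scaling degree at `x₀` of a distribution defined away from `x₀`. -/
def sdAtAway (t : Distr d) (x₀ : Ed d) : ℝ :=
  sInf {ω : ℝ | ∀ f : Ed d → ℝ, IsTestFunction f → x₀ ∉ tsupport f →
    Tendsto (fun l : ℝ => l ^ ω * scaleDistr t x₀ l f) (𝓝[>] (0 : ℝ)) (𝓝 0)}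

/-- `te` extends `t` away from `x`: they agree on test functions supported away from `x`. -/
def ExtendsAway (te t : Distr d) (x : Ed d) : Prop :=
  ∀ ψ : Ed d → ℝ, IsTestFunction ψ → x ∉ tsupport ψ → te ψ = t ψ

/-- Equality of distributions (on test functions). -/
def DistrEq (u v : Distr d) : Prop := ∀ ψ, IsTestFunction ψ → u ψ = v ψ

/-- A `(a,γ)`-coherent germ of distributions. -/
def IsCoherentGerm (F : Ed d → Distr d) (a γ : ℝ) : Prop :=
  ∀ r : ℕ, (r : ℝ) > -a → ∀ K : Set (Ed d), IsCompact K → ∃ C : ℝ,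
    ∀ x ∈ K, ∀ y ∈ K, ∀ l ∈ Set.Ioc (0 : ℝ) 1, ∀ φ, InBr r φ →
      |F x (scaleTF φ y l) - F y (scaleTF φ y l)| ≤ C * l ^ a * (‖x - y‖ + l) ^ (γ - a)

/-- The `1`-enlargement of a set. -/
def enl1 (K : Set (Ed d)) : Set (Ed d) := {x | ∃ y ∈ K, dist x y ≤ 1}

/-- The Dirac delta distribution at `x`. -/
def diracD (x : Ed d) : Distr d where
  toFun f := f x
  map_add' := fun _ _ => rfl
  map_smul' := fun _ _ => rfl

end

/-! Substituting `x = x₀ + ε • u`, the mollified product tested against `ψ` becomes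
`∫ u, (∫ v, f (x₀ + ε • u - ε • v) * ρ v) * ψ (x₀ + ε • u) * ρ u`. The integrand is jointly
continuous in `(ε, u)` and supported in the compact set `tsupport ρ`, so this is continuous in `ε`
up to `ε = 0`, where it equals `f x₀ * ψ x₀ * ∫ ρ = f x₀ * ψ x₀`. -/

section ParametricIntegral

variable {X Y : Type*} [TopologicalSpace X] [FirstCountableTopology X] [LocallyCompactSpace X]
  [TopologicalSpace Y] [MeasurableSpace Y] [OpensMeasurableSpace Y] {μ : Measure Y}
  [IsLocallyFiniteMeasure μ]

theorem continuous_integral_mul_of_hasCompactSupport {H : X → Y → ℝ} (hH : Continuous H.uncurry)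
    {ρ : Y → ℝ} (hρ : Continuous ρ) (hρc : HasCompactSupport ρ) :
    Continuous fun x => ∫ y, H x y * ρ y ∂μ := by
  have hset : ∀ x, ∫ y in tsupport ρ, H x y * ρ y ∂μ = ∫ y, H x y * ρ y ∂μ := fun x =>
    setIntegral_eq_integral_of_forall_compl_eq_zero fun y hy => by
      rw [image_eq_zero_of_notMem_tsupport hy, mul_zero]
  simp only [← hset]
  exact continuous_parametric_integral_of_continuous
    (f := fun x y => H x y * ρ y) (hH.mul (hρ.comp continuous_snd)) hρc

end ParametricIntegral

section DiracProduct

variable {d : ℕ}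

theorem IsTestFunction.scaleTF {ρ : Ed d → ℝ} (hρ : IsTestFunction ρ) (x : Ed d) {ε : ℝ}
    (hε : ε ≠ 0) : IsTestFunction (_root_.scaleTF ρ x ε) := by
  refine ⟨contDiff_const.mul (hρ.1.comp ((contDiff_const.sub contDiff_id).const_smul ε⁻¹)), ?_⟩
  have h : _root_.scaleTF ρ x ε = (fun z => ε ^ (-(d : ℤ)) * ρ z) ∘
      ((Homeomorph.subLeft x).trans (Homeomorph.smulOfNeZero ε⁻¹ (inv_ne_zero hε))) := rfl
  rw [h]
  exact hρ.2.mul_left.comp_homeomorph _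

theorem integral_mul_rescaled_eq_integral_comp_smul (g ρ : Ed d → ℝ) {ε : ℝ} (hε : 0 < ε) :
    ∫ y, g y * (ε ^ (-(d : ℤ)) * ρ (ε⁻¹ • y)) = ∫ u, g (ε • u) * ρ u := by
  have hscale := Measure.integral_comp_smul_of_nonneg volume
    (fun y => g y * (ε ^ (-(d : ℤ)) * ρ (ε⁻¹ • y))) ε (hR := hε.le)
  simp only [finrank_euclideanSpace_fin, smul_smul, inv_mul_cancel₀ hε.ne', one_smul] at hscale
  rw [← inv_smul_eq_iff₀ (by positivity), inv_inv, ← integral_smul] at hscale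
  rw [← hscale]
  congr 1 with u
  rw [zpow_neg, zpow_natCast, smul_eq_mul]
  field_simp

theorem integral_mul_scaleTF (g ρ : Ed d → ℝ) (x : Ed d) {ε : ℝ} (hε : 0 < ε) :
    ∫ y, g y * scaleTF ρ x ε y = ∫ u, g (x - ε • u) * ρ u := by
  rw [← integral_sub_left_eq_self _ volume x]
  simp only [scaleTF, sub_sub_cancel]
  exact integral_mul_rescaled_eq_integral_comp_smul (fun y => g (x - y)) ρ hε

theorem integral_mul_mollifyAt_diracD (g ρ : Ed d → ℝ) (x₀ : Ed d) {ε : ℝ} (hε : 0 < ε) :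
    ∫ x, g x * mollifyAt (diracD x₀) ρ ε x = ∫ u, g (x₀ + ε • u) * ρ u := by
  rw [← integral_add_left_eq_self _ x₀]
  simp only [mollifyAt, diracD, LinearMap.coe_mk, AddHom.coe_mk, add_sub_cancel_left]
  exact integral_mul_rescaled_eq_integral_comp_smul (fun y => g (x₀ + y)) ρ hε

theorem mollifyAt_eq_integral {f : Ed d → ℝ} {F : Distr d}
    (hF : ∀ ψ, IsTestFunction ψ → F ψ = ∫ x, f x * ψ x) {ρ : Ed d → ℝ} (hρ : IsTestFunction ρ)
    (x : Ed d) {ε : ℝ} (hε : 0 < ε) :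
    mollifyAt F ρ ε x = ∫ v, f (x - ε • v) * ρ v := by
  rw [← integral_mul_scaleTF f ρ x hε, ← hF _ (hρ.scaleTF x hε.ne')]
  rfl

theorem tendsto_integral_mollifyAt_mul_mollifyAt_diracD {f : Ed d → ℝ} (hf : Continuous f)
    {F : Distr d} (hF : ∀ ψ, IsTestFunction ψ → F ψ = ∫ x, f x * ψ x) {ρ : Ed d → ℝ}
    (hρ : IsTestFunction ρ) (hρ_one : ∫ x, ρ x = 1) {ψ : Ed d → ℝ} (hψ : Continuous ψ)
    (x₀ : Ed d) :
    Tendsto (fun ε => ∫ x, mollifyAt F ρ ε x * mollifyAt (diracD x₀) ρ ε x * ψ x)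
      (𝓝[>] 0) (𝓝 (f x₀ * ψ x₀)) := by
  have hρc : Continuous ρ := hρ.1.continuous
  let H : ℝ → Ed d → ℝ := fun ε u => (∫ v, f (x₀ + ε • u - ε • v) * ρ v) * ψ (x₀ + ε • u)
  have hH : Continuous H.uncurry := by
    have hinner := continuous_integral_mul_of_hasCompactSupport (μ := volume)
      (H := fun (p : ℝ × Ed d) v => f (x₀ + p.1 • p.2 - p.1 • v)) (hf.comp (by fun_prop)) hρc hρ.2
    exact hinner.mul (hψ.comp (by fun_prop))
  have hH_zero : ∫ u, H 0 u * ρ u = f x₀ * ψ x₀ := by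
    simp only [H, zero_smul, add_zero, sub_zero, integral_const_mul, hρ_one]
    ring
  have hmollify : ∀ ε > (0 : ℝ),
      ∫ x, mollifyAt F ρ ε x * mollifyAt (diracD x₀) ρ ε x * ψ x = ∫ u, H ε u * ρ u := by
    intro ε hε
    simp only [mul_right_comm _ _ (ψ _), integral_mul_mollifyAt_diracD _ ρ x₀ hε,
      mollifyAt_eq_integral hF hρ _ hε, H]
  rw [← hH_zero]
  refine ((continuous_integral_mul_of_hasCompactSupport hH hρc hρ.2).tendsto 0).mono_left
    nhdsWithin_le_nhds |>.congr' ?_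
  filter_upwards [self_mem_nhdsWithin] with ε hε
  exact (hmollify ε hε).symm

theorem isCanonicalProduct_diracD {f : Ed d → ℝ} (hf : Continuous f) {F : Distr d}
    (hF : ∀ ψ, IsTestFunction ψ → F ψ = ∫ x, f x * ψ x) (x₀ : Ed d) :
    IsCanonicalProduct F (diracD x₀) (f x₀ • diracD x₀) := fun _ hρ _ hψ =>
  tendsto_integral_mollifyAt_mul_mollifyAt_diracD hf hF hρ.1 hρ.2.2 hψ.1.continuous x₀

end DiracProduct

theorem product_with_dirac_general
    (d : ℕ) (α : ℝ)
    (f : Ed d → ℝ) (hf : HolderFunLoc α f)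
    (F : Distr d) (hF : ∀ ψ, IsTestFunction ψ → F ψ = ∫ x, f x * ψ x) :
    ∃ w : Distr d, IsCanonicalProduct F (diracD (0 : Ed d)) w ∧
      ∀ φ : Ed d → ℝ, IsTestFunction φ →
        w φ = diracD (0 : Ed d) (fun x => f x * φ x) ∧ w φ = f 0 * φ 0 :=
  ⟨f 0 • diracD 0, isCanonicalProduct_diracD hf.1.continuous hF 0, fun _ _ => ⟨rfl, rfl⟩⟩

/-- for `f ∈ C^α_loc` with `α > d/2` and the Dirac delta `δ₀ ∈ C^{-d}`,
the canonical product `f·δ₀` exists, is given by `(f·δ₀)(φ) = δ₀(fφ)`, and equals `f(0)δ₀`. -/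
theorem product_with_dirac
    (d : ℕ) (hd : 1 ≤ d) (α : ℝ) (hα : (d : ℝ) / 2 < α)
    (f : Ed d → ℝ) (hf : HolderFunLoc α f)
    (F : Distr d) (hF : ∀ ψ, IsTestFunction ψ → F ψ = ∫ x, f x * ψ x)
    (hδ : HolderDistOn (diracD (0 : Ed d)) (-(d : ℝ))) :
    ∃ w : Distr d, IsCanonicalProduct F (diracD (0 : Ed d)) w ∧
      ∀ φ : Ed d → ℝ, IsTestFunction φ →
        w φ = diracD (0 : Ed d) (fun x => f x * φ x) ∧ w φ = f 0 * φ 0 :=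
  product_with_dirac_general d α f hf F hF
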